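/- arXiv:2405.09794 — 3 statements merged into one kernel-verified Lean document; each statement's English description precedes it below -/
import Mathlib

section
/- The maximal safe set Ω* is the largest set S ⊆ Z such that (i) S ∩ F = ∅ and (ii) for every z ∈ S there exists a ∈ A with f(z, a, b) ∈ S for all b ∈ B(z). That is, any set S satisfying (i) and (ii) is contained in Ω*, and Ω* itself satisfies (i) and (ii). -/
/-- Closed-loop trajectory under policy `π` and adversary sequence `b`. -/
def traj {Z A B : Type*} (f : Z → A → B → Z) (π : Z → A) (b : ℕ → B) (z0 : Z) : ℕ → Z
  | 0 => z0
  | t + 1 => f (traj f π b z0 t) (π (traj f π b z0 t)) (b t)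

/-- The maximal safe set Ω*. -/
def SafeSet {Z A B : Type*} (f : Z → A → B → Z) (Badm : Z → Set B) (F : Set Z) : Set Z :=
  {z0 | ∃ π : Z → A, ∀ b : ℕ → B,
    (∀ t, b t ∈ Badm (traj f π b z0 t)) → ∀ t, traj f π b z0 t ∉ F}

/-! A controlled-invariant set avoiding `F` is safe: choosing an invariance-preserving action at
each of its points is a policy that keeps every admissible trajectory inside it. Conversely, `Ω*`
avoids `F` because some admissible adversary sequence always exists (the adversary replies to each
state with a fixed admissible move), and it is controlled invariant because a policy that is safe
from `z` stays safe from every admissible successor of `z`: prepending the first adversary move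
turns an admissible sequence from the successor into one from `z`. -/

section Safety

variable {Z A B : Type*} (f : Z → A → B → Z) (Badm : Z → Set B)

def IsControlledInvariant (S : Set Z) : Prop :=
  ∀ z ∈ S, ∃ a : A, ∀ b ∈ Badm z, f z a b ∈ S

variable {f}

theorem traj_succ_cons (π : Z → A) (b : ℕ → B) (z0 : Z) (b0 : B) (t : ℕ) :
    traj f π (Stream'.cons b0 b) z0 (t + 1) = traj f π b (f z0 (π z0) b0) t := by
  induction t with
  | zero => rfl
  | succ t ih => exact congrArg (fun z => f z (π z) (b t)) ih

/-- The adversary answering every state `z` with `β z`. -/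
theorem traj_feedback (π : Z → A) (β : Z → B) (z0 : Z) (t : ℕ) :
    traj f π (fun s => β ((fun z => f z (π z) (β z))^[s] z0)) z0 t
      = (fun z => f z (π z) (β z))^[t] z0 := by
  induction t with
  | zero => rfl
  | succ t ih => rw [Function.iterate_succ_apply', ← ih, traj, ih]

theorem exists_admissible (hB : ∀ z, (Badm z).Nonempty) (π : Z → A) (z0 : Z) :
    ∃ b : ℕ → B, ∀ t, b t ∈ Badm (traj f π b z0 t) := by
  choose β hβ using hB
  refine ⟨fun s => β ((fun z => f z (π z) (β z))^[s] z0), fun t => ?_⟩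
  rw [traj_feedback]
  exact hβ _

theorem traj_mem_of_forall_mem {S : Set Z} {π : Z → A}
    (hπ : ∀ z ∈ S, ∀ b ∈ Badm z, f z (π z) b ∈ S) {b : ℕ → B} {z0 : Z} (hz0 : z0 ∈ S)
    (hb : ∀ t, b t ∈ Badm (traj f π b z0 t)) (t : ℕ) : traj f π b z0 t ∈ S := by
  induction t with
  | zero => exact hz0
  | succ t ih => exact hπ _ ih _ (hb t)

variable {Badm}

theorem subset_safeSet {S F : Set Z} (hSF : Disjoint S F)
    (hS : IsControlledInvariant f Badm S) : S ⊆ SafeSet f Badm F := by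
  classical
  intro z0 hz0
  have : Nonempty A := ⟨(hS z0 hz0).choose⟩
  let π : Z → A := fun z => if h : z ∈ S then (hS z h).choose else Classical.arbitrary A
  have hπ : ∀ z ∈ S, ∀ b ∈ Badm z, f z (π z) b ∈ S := fun z hz b hb => by
    simpa only [π, dif_pos hz] using (hS z hz).choose_spec b hb
  exact ⟨π, fun b hb t => hSF.notMem_of_mem_left (traj_mem_of_forall_mem Badm hπ hz0 hb t)⟩

theorem disjoint_safeSet (hB : ∀ z, (Badm z).Nonempty) (F : Set Z) :
    Disjoint (SafeSet f Badm F) F := by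
  refine Set.disjoint_left.2 fun z0 ⟨π, hπ⟩ => ?_
  obtain ⟨b, hb⟩ := exists_admissible Badm hB π z0
  exact hπ b hb 0

theorem isControlledInvariant_safeSet (F : Set Z) :
    IsControlledInvariant f Badm (SafeSet f Badm F) := by
  rintro z0 ⟨π, hπ⟩
  refine ⟨π z0, fun b0 hb0 => ⟨π, fun b hb t => ?_⟩⟩
  have hcons : ∀ t, Stream'.cons b0 b t ∈ Badm (traj f π (Stream'.cons b0 b) z0 t)
    | 0 => hb0
    | t + 1 => traj_succ_cons π b z0 b0 t ▸ hb t
  exact traj_succ_cons π b z0 b0 t ▸ hπ _ hcons (t + 1)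

end Safety

theorem safeSet_largest_invariant_general {Z A B : Type*}
    (f : Z → A → B → Z) (Badm : Z → Set B) (F : Set Z)
    (hB : ∀ z, (Badm z).Nonempty) :
    (∀ S : Set Z, S ∩ F = ∅ →
        (∀ z ∈ S, ∃ a : A, ∀ b ∈ Badm z, f z a b ∈ S) →
        S ⊆ SafeSet f Badm F) ∧
    SafeSet f Badm F ∩ F = ∅ ∧
    (∀ z ∈ SafeSet f Badm F, ∃ a : A, ∀ b ∈ Badm z, f z a b ∈ SafeSet f Badm F) :=
  ⟨fun _ hSF hS => subset_safeSet (Set.disjoint_iff_inter_eq_empty.2 hSF) hS,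
    Set.disjoint_iff_inter_eq_empty.1 (disjoint_safeSet hB F),
    isControlledInvariant_safeSet F⟩

/-- Ω* is the largest set disjoint from F and controlled-invariant. -/
theorem safeSet_largest_invariant {Z A B : Type*} [Nonempty A]
    (f : Z → A → B → Z) (Badm : Z → Set B) (F : Set Z)
    (hB : ∀ z, (Badm z).Nonempty) :
    (∀ S : Set Z, S ∩ F = ∅ →
        (∀ z ∈ S, ∃ a : A, ∀ b ∈ Badm z, f z a b ∈ S) →
        S ⊆ SafeSet f Badm F) ∧
    SafeSet f Badm F ∩ F = ∅ ∧
    (∀ z ∈ SafeSet f Badm F, ∃ a : A, ∀ b ∈ Badm z, f z a b ∈ SafeSet f Badm F) :=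
  safeSet_largest_invariant_general f Badm F hB
end

section
/- Value function certifies infinite-horizon safety: if V : Z → ℝ satisfies the Isaacs fixed point V(z) = max_{a} min_{b ∈ B(z)} min{ ℓ(z), V(f(z,a,b)) } and V(z_0) ≥ 0, then the greedy policy π♯(z) ∈ argmax_a min_{b ∈ B(z)} min{ ℓ(z), V(f(z,a,b)) } guarantees that for every adversary sequence b_t ∈ B(z_t), the trajectory z_{t+1} = f(z_t, π♯(z_t), b_t) satisfies ℓ(z_t) ≥ 0 (hence z_t ∉ F) for all t ≥ 0. -/
/-- Finite-horizon safety value: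
`V 0 z = ℓ z`, `V (T+1) z = max_a min_{b ∈ Badm z} min (ℓ z) (V T (f z a b))`. -/
noncomputable def V {Z A B : Type*} [Fintype A] [Nonempty A]
    (f : Z → A → B → Z) (Badm : Z → Finset B) (hB : ∀ z, (Badm z).Nonempty)
    (ℓ : Z → ℝ) : ℕ → Z → ℝ
  | 0, z => ℓ z
  | T + 1, z =>
    Finset.univ.sup' Finset.univ_nonempty fun a : A =>
      (Badm z).inf' (hB z) fun b => min (ℓ z) (V f Badm hB ℓ T (f z a b))

/-- The greedy policy for an Isaacs fixed point certifies infinite-horizon safety. -/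
theorem value_certifies_safety {Z A B : Type*} [Fintype A] [Nonempty A]
    (f : Z → A → B → Z) (Badm : Z → Finset B) (hB : ∀ z, (Badm z).Nonempty)
    (ℓ : Z → ℝ) (V : Z → ℝ)
    (hfix : ∀ z, V z = Finset.univ.sup' Finset.univ_nonempty fun a : A =>
      (Badm z).inf' (hB z) fun b => min (ℓ z) (V (f z a b)))
    (πsharp : Z → A)
    (hgreedy : ∀ z,
      ((Badm z).inf' (hB z) fun b => min (ℓ z) (V (f z (πsharp z) b))) = V z)
    (z0 : Z) (hz0 : 0 ≤ V z0)
    (b : ℕ → B) (hb : ∀ t, b t ∈ Badm (traj f πsharp b z0 t)) :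
    ∀ t, 0 ≤ ℓ (traj f πsharp b z0 t) := by
  have key : ∀ t, 0 ≤ V (traj f πsharp b z0 t) := by
    intro t
    induction t with
    | zero => exact hz0
    | succ t ih =>
      have h := hgreedy (traj f πsharp b z0 t)
      have hle := Finset.inf'_le (b := b t)
        (f := fun b' => min (ℓ (traj f πsharp b z0 t))
          (V (f (traj f πsharp b z0 t) (πsharp (traj f πsharp b z0 t)) b')))
        (hb t)
      rw [h] at hle
      exact le_trans ih (le_trans hle (min_le_right _ _))
  intro t
  have h := hgreedy (traj f πsharp b z0 t)
  have hle := Finset.inf'_le (b := b t)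
    (f := fun b' => min (ℓ (traj f πsharp b z0 t))
      (V (f (traj f πsharp b z0 t) (πsharp (traj f πsharp b z0 t)) b')))
    (hb t)
  rw [h] at hle
  exact le_trans (key t) (le_trans hle (min_le_left _ _))
end

section
/- Switch-type safety filter preserves the fallback-safe set: let Ω♯ := { z : under fallback policy π♯, for all adversary sequences b_t ∈ B(z_t), the trajectory z_{t+1} = f(z_t, π♯(z_t), b_t) avoids F forever }. Define the monitor Δ(z, a) = 1 if f(z, a, b) ∈ Ω♯ for all b ∈ B(z), else Δ(z, a) = -1, and the switch φ(z,a) = a if Δ(z,a) ≥ 0 else π♯(z). Then for any z_0 ∈ Ω♯ with z_0 ∉ F and any task policy, the filtered trajectory remains in Ω♯ \ F for all time. -/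
/-- The fallback-safe set Ω♯ of the fallback policy `πs`. -/
def FallbackSafe {Z A B : Type*} (f : Z → A → B → Z) (Badm : Z → Set B) (F : Set Z)
    (πs : Z → A) : Set Z :=
  {z0 | ∀ b : ℕ → B, (∀ t, b t ∈ Badm (traj f πs b z0 t)) → ∀ t, traj f πs b z0 t ∉ F}

open Classical in
/-- Monitor: `1` if every adversary action keeps the next state in Ω♯, else `-1`. -/
noncomputable def monitor {Z A B : Type*} (f : Z → A → B → Z) (Badm : Z → Set B)
    (Ω : Set Z) (z : Z) (a : A) : ℝ :=
  if ∀ b ∈ Badm z, f z a b ∈ Ω then 1 else -1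

open Classical in
/-- Switch-type intervention scheme. -/
noncomputable def phi {Z A : Type*} (Δ : Z → A → ℝ) (πs : Z → A) (z : Z) (a : A) : A :=
  if 0 ≤ Δ z a then a else πs z

/-- Filtered closed-loop trajectory. -/
def ftraj {Z A B : Type*} (f : Z → A → B → Z) (φ : Z → A → A) (πtask : Z → A)
    (b : ℕ → B) (z0 : Z) : ℕ → Z
  | 0 => z0
  | t + 1 => f (ftraj f φ πtask b z0 t) (φ (ftraj f φ πtask b z0 t)
      (πtask (ftraj f φ πtask b z0 t))) (b t)

/-- Auxiliary: a state-adversary pair sequence built greedily from admissible actions. -/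
noncomputable def advSeq {Z A B : Type*} (f : Z → A → B → Z) (Badm : Z → Set B)
    (hB : ∀ z, (Badm z).Nonempty) (πs : Z → A) (z : Z) : ℕ → Z × B
  | 0 => (z, (hB z).some)
  | n + 1 =>
      let z' := f (advSeq f Badm hB πs z n).1 (πs (advSeq f Badm hB πs z n).1)
        (advSeq f Badm hB πs z n).2
      (z', (hB z').some)

lemma advSeq_mem {Z A B : Type*} (f : Z → A → B → Z) (Badm : Z → Set B)
    (hB : ∀ z, (Badm z).Nonempty) (πs : Z → A) (z : Z) (t : ℕ) :
    (advSeq f Badm hB πs z t).2 ∈ Badm (advSeq f Badm hB πs z t).1 := by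
  cases t with
  | zero => exact (hB z).some_mem
  | succ n => exact (hB _).some_mem

lemma advSeq_traj {Z A B : Type*} (f : Z → A → B → Z) (Badm : Z → Set B)
    (hB : ∀ z, (Badm z).Nonempty) (πs : Z → A) (z : Z) (t : ℕ) :
    traj f πs (fun n => (advSeq f Badm hB πs z n).2) z t = (advSeq f Badm hB πs z t).1 := by
  induction t with
  | zero => rfl
  | succ n ih => simp [traj, advSeq, ih]

lemma fallbackSafe_notF {Z A B : Type*} {f : Z → A → B → Z} {Badm : Z → Set B} {F : Set Z}
    (hB : ∀ z, (Badm z).Nonempty) {πs : Z → A} {z : Z}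
    (hz : z ∈ FallbackSafe f Badm F πs) : z ∉ F := by
  have := hz (fun n => (advSeq f Badm hB πs z n).2)
    (fun t => by rw [advSeq_traj]; exact advSeq_mem f Badm hB πs z t) 0
  exact this

lemma fallbackSafe_inv {Z A B : Type*} {f : Z → A → B → Z} {Badm : Z → Set B} {F : Set Z}
    {πs : Z → A} {z : Z} (hz : z ∈ FallbackSafe f Badm F πs) {b0 : B} (hb0 : b0 ∈ Badm z) :
    f z (πs z) b0 ∈ FallbackSafe f Badm F πs := by
  intro b' hadm' t
  set b'' : ℕ → B := fun n => Nat.casesOn n b0 b' with hb''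
  have key : ∀ n, traj f πs b'' z (n + 1) = traj f πs b' (f z (πs z) b0) n := by
    intro n
    induction n with
    | zero => rfl
    | succ m ih =>
      show f (traj f πs b'' z (m + 1)) (πs (traj f πs b'' z (m + 1))) (b'' (m + 1)) = _
      rw [ih]; rfl
  have hadm'' : ∀ n, b'' n ∈ Badm (traj f πs b'' z n) := by
    intro n
    cases n with
    | zero => exact hb0
    | succ m => rw [key]; exact hadm' m
  have := hz b'' hadm'' (t + 1)
  rwa [key] at this

/-- The switch-type safety filter keeps the filtered trajectory in Ω♯ \ F forever. -/
theorem switch_filter_preserves_fallback_safe {Z A B : Type*}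
    (f : Z → A → B → Z) (Badm : Z → Set B) (F : Set Z)
    (hB : ∀ z, (Badm z).Nonempty) (πs : Z → A)
    (z0 : Z) (hz0 : z0 ∈ FallbackSafe f Badm F πs) (hz0F : z0 ∉ F)
    (πtask : Z → A) (b : ℕ → B)
    (hb : ∀ t, b t ∈ Badm
      (ftraj f (phi (monitor f Badm (FallbackSafe f Badm F πs)) πs) πtask b z0 t)) :
    ∀ t, ftraj f (phi (monitor f Badm (FallbackSafe f Badm F πs)) πs) πtask b z0 t
        ∈ FallbackSafe f Badm F πs \ F := by
  intro t
  induction t with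
  | zero => exact ⟨hz0, hz0F⟩
  | succ n ih =>
    set Ω := FallbackSafe f Badm F πs
    set z := ftraj f (phi (monitor f Badm Ω) πs) πtask b z0 n with hzdef
    have hnext : ftraj f (phi (monitor f Badm Ω) πs) πtask b z0 (n + 1)
        = f z (phi (monitor f Badm Ω) πs z (πtask z)) (b n) := rfl
    have hmem : f z (phi (monitor f Badm Ω) πs z (πtask z)) (b n) ∈ Ω := by
      unfold phi
      split
      · rename_i h
        unfold monitor at h
        split at h
        · rename_i hall
          exact hall (b n) (hb n)
        · norm_num at h
      · exact fallbackSafe_inv ih.1 (hb n)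
    rw [hnext]
    exact ⟨hmem, fallbackSafe_notF hB hmem⟩
end
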